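/- Let $n_1 > n_2 \geq 3$ and let $\mathcal{H}_{n_1,n_2}$ be the 3-uniform bi-hypergraph on $[n_1] \times [n_2]$ with edges the 3-subsets taking exactly 2 distinct values in both coordinates. Then $\mathcal{H}_{n_1,n_2}$ is not $k$-colorable for any $k \notin \{n_1, n_2\}$; in particular it has no strict coloring with exactly $n$ classes for $n_2 < n < n_1$, so its feasible set has a gap. -/

import Mathlib

/-!
An edge of `E2 n1 n2` is exactly a corner `(a, c), (a, d), (b, c)` with `a ≠ b` and `c ≠ d`, and
since two related pairs force the third, a strict coloring relates exactly one of its three pairs.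
If no row holds two points of one class, take `a ≠ b`, a column `c` and two further columns
`d ≠ d'`: the corners at `(a, c)` towards `b` and towards `d`, `d'` give `(a, c) ~ (b, c)`, since
otherwise `(a, d) ~ (b, c) ~ (a, d')`. So the classes are the `n2` columns. If instead
`(a, c) ~ (a, d)` for some `c ≠ d`, the same holds in every row, hence no column holds two points
of one class, and the same argument with rows and columns exchanged shows that the classes are
the `n1` rows.
-/

/-- Edge set of the 3-uniform bi-hypergraph `H_{n₁,n₂}` on `[n₁] × [n₂]`. -/
def E2 (n1 n2 : ℕ) : Set (Finset (Fin n1 × Fin n2)) :=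
  {b | b.card = 3 ∧ (b.image Prod.fst).card = 2 ∧ (b.image Prod.snd).card = 2}

/-- Feasible partition (proper coloring) of a bi-hypergraph. -/
def ProperSetoid {X : Type*} (E : Set (Finset X)) (P : Setoid X) : Prop :=
  ∀ b ∈ E, (∃ x ∈ b, ∃ y ∈ b, x ≠ y ∧ P x y) ∧ (∃ x ∈ b, ∃ y ∈ b, ¬ P x y)

theorem exists_ne_ne_of_two_lt_card {β : Type*} (h : 2 < Nat.card β) (c : β) :
    ∃ d d', d ≠ d' ∧ d ≠ c ∧ d' ≠ c := by
  have : Finite β := Nat.finite_of_card_ne_zero (by omega)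
  have hc : 1 < ({c}ᶜ : Set β).ncard := by
    rw [Set.ncard_compl, Set.ncard_singleton]; omega
  obtain ⟨d, d', hd, hd', hne⟩ := (Set.one_lt_ncard_iff).1 hc
  exact ⟨d, d', hne, hd, hd'⟩

namespace Setoid

variable {X : Type*} [DecidableEq X] (P : Setoid X) {u v w : X}

theorem rel_or_rel_or_rel_of_mem_triple {x y : X} (hx : x ∈ ({u, v, w} : Finset X))
    (hy : y ∈ ({u, v, w} : Finset X)) (hxy : x ≠ y) (h : P x y) :
    P u v ∨ P u w ∨ P v w := by
  simp only [Finset.mem_insert, Finset.mem_singleton] at hx hy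
  have h' := P.symm h
  rcases hx with rfl | rfl | rfl <;> rcases hy with rfl | rfl | rfl <;> tauto

theorem rel_of_mem_triple (huv : P u v) (huw : P u w) {x y : X}
    (hx : x ∈ ({u, v, w} : Finset X)) (hy : y ∈ ({u, v, w} : Finset X)) : P x y := by
  have hu : ∀ z ∈ ({u, v, w} : Finset X), P u z := by
    simp only [Finset.mem_insert, Finset.mem_singleton]
    rintro z (rfl | rfl | rfl)
    exacts [P.refl z, huv, huw]
  exact P.trans (P.symm (hu x hx)) (hu y hy)

end Setoid

theorem corner_mem_E2 {n1 n2 : ℕ} {a b : Fin n1} {c d : Fin n2} (hab : a ≠ b) (hcd : c ≠ d) :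
    {(a, c), (a, d), (b, c)} ∈ E2 n1 n2 := by
  simp [E2, hab, hcd, hcd.symm]

section Corners

variable {α β : Type*}

def Setoid.IsCornerProper (P : Setoid (α × β)) : Prop :=
  ∀ ⦃a b : α⦄ ⦃c d : β⦄, a ≠ b → c ≠ d →
    (P (a, c) (a, d) ∨ P (a, c) (b, c) ∨ P (a, d) (b, c)) ∧
      ¬ (P (a, c) (a, d) ∧ P (a, c) (b, c))

theorem ProperSetoid.isCornerProper {n1 n2 : ℕ} {P : Setoid (Fin n1 × Fin n2)}
    (hP : ProperSetoid (E2 n1 n2) P) : P.IsCornerProper := by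
  intro a b c d hab hcd
  obtain ⟨⟨x, hx, y, hy, hxy, hrel⟩, ⟨x', hx', y', hy', hnrel⟩⟩ := hP _ (corner_mem_E2 hab hcd)
  exact ⟨P.rel_or_rel_or_rel_of_mem_triple hx hy hxy hrel,
    fun ⟨h₁, h₂⟩ => hnrel (P.rel_of_mem_triple h₁ h₂ hx' hy')⟩

namespace Setoid.IsCornerProper

variable {P : Setoid (α × β)}

theorem comap_swap (hP : P.IsCornerProper) : (P.comap Prod.swap).IsCornerProper := by
  intro c d a b hcd hab
  simp only [Setoid.comap_rel, Prod.swap_prod_mk]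
  obtain ⟨hsome, hnall⟩ := hP hab hcd
  refine ⟨?_, fun ⟨h₁, h₂⟩ => hnall ⟨h₂, h₁⟩⟩
  rcases hsome with h | h | h
  exacts [Or.inr (Or.inl h), Or.inl h, Or.inr (Or.inr (P.symm h))]

theorem rel_row_of_rel_row (hP : P.IsCornerProper) {a : α} {c d : β} (hcd : c ≠ d)
    (h : P (a, c) (a, d)) (b : α) : P (b, c) (b, d) := by
  obtain rfl | hab := eq_or_ne a b
  · exact h
  rcases (hP hab.symm hcd).1 with hbb | hba | hba
  · exact hbb
  · exact absurd ⟨h, P.symm hba⟩ (hP hab hcd).2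
  · exact absurd ⟨P.symm h, P.trans (P.symm h) (P.symm hba)⟩ (hP hab hcd.symm).2

theorem not_rel_col_of_rel_row (hP : P.IsCornerProper) {a : α} {c d : β} (hcd : c ≠ d)
    (h : P (a, c) (a, d)) {x y : α} (hxy : x ≠ y) (e : β) : ¬ P (x, e) (y, e) := by
  intro hcol
  have hcol' : P (x, c) (y, c) := hP.comap_swap.rel_row_of_rel_row hxy hcol c
  exact (hP hxy hcd).2 ⟨hP.rel_row_of_rel_row hcd h x, hcol'⟩

theorem rel_col_of_forall_not_rel_row (hP : P.IsCornerProper) (hβ : 2 < Nat.card β)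
    (hrow : ∀ a c d, c ≠ d → ¬ P (a, c) (a, d)) (a b : α) (c : β) : P (a, c) (b, c) := by
  obtain rfl | hab := eq_or_ne a b
  · exact P.refl _
  obtain ⟨d, d', hdd', hdc, hd'c⟩ := exists_ne_ne_of_two_lt_card hβ c
  rcases (hP hab hdc.symm).1 with h | h | h
  · exact absurd h (hrow a c d hdc.symm)
  · exact h
  rcases (hP hab hd'c.symm).1 with h' | h' | h'
  · exact absurd h' (hrow a c d' hd'c.symm)
  · exact h'
  · exact absurd (P.trans h (P.symm h')) (hrow a d d' hdd')

theorem eq_ker_snd_of_forall_not_rel_row (hP : P.IsCornerProper) (hβ : 2 < Nat.card β)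
    (hrow : ∀ a c d, c ≠ d → ¬ P (a, c) (a, d)) : P = Setoid.ker Prod.snd := by
  have hcol := hP.rel_col_of_forall_not_rel_row hβ hrow
  ext ⟨a, c⟩ ⟨b, d⟩
  rw [Setoid.ker_def]
  refine ⟨fun h => ?_, fun (h : c = d) => h ▸ hcol a b c⟩
  by_contra hcd
  exact hrow a c d hcd (P.trans h (hcol b a d))

theorem eq_ker_fst_or_eq_ker_snd (hP : P.IsCornerProper) (hα : 2 < Nat.card α)
    (hβ : 2 < Nat.card β) : P = Setoid.ker Prod.fst ∨ P = Setoid.ker Prod.snd := by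
  by_cases hrow : ∃ a c d, c ≠ d ∧ P (a, c) (a, d)
  · obtain ⟨a, c, d, hcd, h⟩ := hrow
    left
    have hswap := hP.comap_swap.eq_ker_snd_of_forall_not_rel_row hα
      fun e x y hxy => hP.not_rel_col_of_rel_row hcd h hxy e
    ext x y
    simpa [Setoid.comap_rel] using Setoid.ext_iff.1 hswap x.swap y.swap
  · push Not at hrow
    exact Or.inr (hP.eq_ker_snd_of_forall_not_rel_row hβ hrow)

theorem card_quotient_eq_or (hP : P.IsCornerProper) (hα : 2 < Nat.card α)
    (hβ : 2 < Nat.card β) :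
    Nat.card (Quotient P) = Nat.card α ∨ Nat.card (Quotient P) = Nat.card β := by
  have : Nonempty α := (Nat.card_pos_iff.1 (by omega)).1
  have : Nonempty β := (Nat.card_pos_iff.1 (by omega)).1
  rcases hP.eq_ker_fst_or_eq_ker_snd hα hβ with rfl | rfl
  · exact Or.inl (Nat.card_congr (Setoid.quotientKerEquivOfSurjective _ Prod.fst_surjective))
  · exact Or.inr (Nat.card_congr (Setoid.quotientKerEquivOfSurjective _ Prod.snd_surjective))

end Setoid.IsCornerProper

end Corners

/-- for `n₁ > n₂ ≥ 3`, `H_{n₁,n₂}` has no strict `k`-coloring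
for any `k ∉ {n₁, n₂}`; in particular none with `n₂ < k < n₁` classes, so its
feasible set has a gap. -/
theorem stmt15 (n1 n2 : ℕ) (h12 : n2 < n1) (h2 : 3 ≤ n2)
    (k : ℕ) (hk1 : k ≠ n1) (hk2 : k ≠ n2) :
    ¬ ∃ P : Setoid (Fin n1 × Fin n2),
        ProperSetoid (E2 n1 n2) P ∧ Nat.card (Quotient P) = k := by
  rintro ⟨P, hP, rfl⟩
  have hcard := hP.isCornerProper.card_quotient_eq_or
    (by rw [Nat.card_fin]; omega) (by rw [Nat.card_fin]; omega)
  rw [Nat.card_fin, Nat.card_fin] at hcard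
  tauto
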